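/- arXiv:1708.08421 — 2 statements merged into one kernel-verified Lean document; each statement's English description precedes it below -/
import Mathlib

section
/- Let d ≥ 1. Let a^H : ℤ^d → ℂ be the d-dimensional Haar low-pass filter, and for each ordered pair (γ₁, γ₂) of distinct elements of {0,1}^d ⊆ ℤ^d let b_{γ₁,γ₂} := 2^{-d}(δ_{γ₁} − δ_{γ₂}). Then for all γ ∈ {0,1}^d and all n ∈ ℤ^d one has Σ_{k∈ℤ^d} a^H(γ+2k)·conj(a^H(n+γ+2k)) + (1/2)·Σ_{(γ₁,γ₂): γ₁,γ₂∈{0,1}^d, γ₁≠γ₂} Σ_{k∈ℤ^d} b_{γ₁,γ₂}(γ+2k)·conj(b_{γ₁,γ₂}(n+γ+2k)) = 2^{-d}·δ(n). (The factor 1/2 accounts for each unordered pair being counted twice; equivalently, choosing one filter per unordered pair of distinct vertices of {0,1}^d yields a tight framelet filter bank with s = 2^{d-1}(2^d − 1) high-pass filters.) -/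
open scoped BigOperators

/-- The `d`-dimensional Haar low-pass filter: value `2^{-d}` on `{0,1}^d ⊆ ℤ^d`, zero elsewhere. -/
noncomputable def haarFilter (d : ℕ) : (Fin d → ℤ) → ℂ :=
  fun k => if ∀ i, k i = 0 ∨ k i = 1 then ((2 : ℂ) ^ d)⁻¹ else 0

/-- Embedding of `{0,1}^d` (modeled by `Fin d → Bool`) into `ℤ^d`. -/
def boolToInt {d : ℕ} (γ : Fin d → Bool) : Fin d → ℤ :=
  fun i => if γ i then 1 else 0

/-- The high-pass filter `2^{-d}(δ_{γ₁} - δ_{γ₂})`. -/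
noncomputable def haarHighPass (d : ℕ) (γ₁ γ₂ : Fin d → ℤ) : (Fin d → ℤ) → ℂ :=
  fun k => ((2 : ℂ) ^ d)⁻¹ * ((if k = γ₁ then 1 else 0) - (if k = γ₂ then 1 else 0))

/-!
Both filters are supported on the cube `{0,1}^d`, and for a vertex `γ` the point `γ + 2k` lies
in the cube only for `k = 0`, so every polyphase sum collapses to its `k = 0` term. On the cube
the filters are `2^{-d}` times vertex indicators, and with `p = δ_γ`, `q = δ_{n+γ}` restricted to
the `N = 2^d` vertices, the high-pass part is the Lagrange-type identity
`∑_{i,j} (p_i - p_j)(q_i - q_j) = 2 (N ∑ p_i q_i - ∑ p_i ∑ q_j)`. Its second term cancels the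
low-pass contribution `2^{-2d} ∑ q_j`, and `N ∑ p_i q_i = 2^d δ(n)` is what remains.
-/

open Finset Function

theorem Finset.sum_sum_sub_mul_sub {ι R : Type*} [Fintype ι] [CommRing R] (p q : ι → R) :
    ∑ i, ∑ j, (p i - p j) * (q i - q j) =
      2 * (Fintype.card ι * ∑ i, p i * q i - (∑ i, p i) * ∑ i, q i) := by
  have row : ∀ i, ∑ j, (p i - p j) * (q i - q j) =
      Fintype.card ι * (p i * q i) - p i * ∑ j, q j - q i * ∑ j, p j + ∑ j, p j * q j := by
    intro i
    simp only [sub_mul, mul_sub, sum_sub_distrib, ← mul_sum, ← sum_mul,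
      sum_const, card_univ, nsmul_eq_mul]
    ring
  simp only [row, sum_add_distrib, sum_sub_distrib, ← mul_sum, ← sum_mul, sum_const, card_univ,
    nsmul_eq_mul]
  ring

section

variable {d : ℕ}

theorem eq_zero_of_add_two_mul_mem_cube {γ k : Fin d → ℤ} (hγ : ∀ i, γ i = 0 ∨ γ i = 1)
    (h : ∀ i, γ i + 2 * k i = 0 ∨ γ i + 2 * k i = 1) : k = 0 := by
  funext i
  have := hγ i
  have := h i
  simp only [Pi.zero_apply]
  omega

theorem finsum_polyphase_eq_of_support_subset_cube {R : Type*} [CommSemiring R] [StarRing R]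
    {a : (Fin d → ℤ) → R} (ha : support a ⊆ {x | ∀ i, x i = 0 ∨ x i = 1}) {γ : Fin d → ℤ}
    (hγ : ∀ i, γ i = 0 ∨ γ i = 1) (n : Fin d → ℤ) :
    ∑ᶠ k : Fin d → ℤ, a (fun i => γ i + 2 * k i) * starRingEnd R (a (fun i => n i + γ i + 2 * k i))
      = a γ * starRingEnd R (a (n + γ)) := by
  rw [finsum_eq_single _ 0 fun k hk => ?_]
  · simp only [Pi.zero_apply, mul_zero, add_zero]
    rfl
  · rw [notMem_support.mp fun h => hk (eq_zero_of_add_two_mul_mem_cube hγ (ha h)), zero_mul]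

theorem boolToInt_mem_cube (b : Fin d → Bool) : ∀ i, boolToInt b i = 0 ∨ boolToInt b i = 1 := by
  intro i
  unfold boolToInt
  split_ifs <;> simp

theorem boolToInt_injective : Injective (boolToInt (d := d)) := by
  intro b b' h
  funext i
  have := congrFun h i
  revert this
  unfold boolToInt
  cases b i <;> cases b' i <;> simp

theorem exists_boolToInt_eq {x : Fin d → ℤ} (hx : ∀ i, x i = 0 ∨ x i = 1) :
    ∃ b, boolToInt b = x :=
  ⟨fun i => decide (x i = 1), funext fun i => by rcases hx i with h | h <;> simp [boolToInt, h]⟩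

theorem sum_ite_eq_boolToInt (x : Fin d → ℤ) :
    ∑ b : Fin d → Bool, (if x = boolToInt b then (1 : ℂ) else 0) =
      if ∀ i, x i = 0 ∨ x i = 1 then 1 else 0 := by
  by_cases hx : ∀ i, x i = 0 ∨ x i = 1
  · obtain ⟨b₀, rfl⟩ := exists_boolToInt_eq hx
    simp [boolToInt_injective.eq_iff, hx]
  · rw [if_neg hx]
    refine sum_eq_zero fun b _ => if_neg ?_
    rintro rfl
    exact hx (boolToInt_mem_cube b)

theorem support_haarFilter_subset : support (haarFilter d) ⊆ {x | ∀ i, x i = 0 ∨ x i = 1} :=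
  fun _ hx => by_contra fun h => hx (if_neg h)

theorem support_haarHighPass_subset (b₁ b₂ : Fin d → Bool) :
    support (haarHighPass d (boolToInt b₁) (boolToInt b₂)) ⊆ {x | ∀ i, x i = 0 ∨ x i = 1} := by
  intro x hx
  by_contra h
  have hne : ∀ b, x ≠ boolToInt b := by
    rintro b rfl
    exact h (boolToInt_mem_cube b)
  exact hx (by simp [haarHighPass, hne])

theorem conj_haarFilter (x : Fin d → ℤ) : starRingEnd ℂ (haarFilter d x) = haarFilter d x := by
  simp only [haarFilter]
  split_ifs <;> simp [map_ofNat]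

theorem conj_haarHighPass (γ₁ γ₂ x : Fin d → ℤ) :
    starRingEnd ℂ (haarHighPass d γ₁ γ₂ x) = haarHighPass d γ₁ γ₂ x := by
  simp only [haarHighPass]
  split_ifs <;> simp [map_ofNat]

theorem haarHighPass_self (γ₁ : Fin d → ℤ) : haarHighPass d γ₁ γ₁ = 0 := by
  ext
  simp [haarHighPass]

theorem haarFilter_eq_mul_sum (x : Fin d → ℤ) :
    haarFilter d x = ((2 : ℂ) ^ d)⁻¹ * ∑ b : Fin d → Bool, if x = boolToInt b then 1 else 0 := by
  rw [sum_ite_eq_boolToInt, haarFilter, mul_ite, mul_one, mul_zero]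

theorem sum_ite_mul_ite_eq_boolToInt (x y : Fin d → ℤ) :
    ∑ b : Fin d → Bool, (if x = boolToInt b then (1 : ℂ) else 0) *
        (if y = boolToInt b then 1 else 0) =
      if y = x then ∑ b : Fin d → Bool, if x = boolToInt b then (1 : ℂ) else 0 else 0 := by
  split_ifs with h
  · subst h
    exact sum_congr rfl fun b _ => by split_ifs <;> simp
  · refine sum_eq_zero fun b _ => ?_
    split_ifs with hx hy <;> simp_all

end

theorem haar_directional_tffb_general (d : ℕ) (γ : Fin d → ℤ)
    (hγ : ∀ i, γ i = 0 ∨ γ i = 1) (n : Fin d → ℤ) :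
    (∑ᶠ k : Fin d → ℤ,
        haarFilter d (fun i => γ i + 2 * k i) *
          (starRingEnd ℂ) (haarFilter d (fun i => n i + γ i + 2 * k i))) +
      (1 / 2 : ℂ) *
        ∑ γ₁ : Fin d → Bool, ∑ γ₂ : Fin d → Bool,
          (if γ₁ ≠ γ₂ then
            ∑ᶠ k : Fin d → ℤ,
              haarHighPass d (boolToInt γ₁) (boolToInt γ₂) (fun i => γ i + 2 * k i) *
                (starRingEnd ℂ)
                  (haarHighPass d (boolToInt γ₁) (boolToInt γ₂) (fun i => n i + γ i + 2 * k i))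
          else 0) =
      ((2 : ℂ) ^ d)⁻¹ * (if n = 0 then 1 else 0) := by
  set p : (Fin d → Bool) → ℂ := fun b => if γ = boolToInt b then 1 else 0
  set q : (Fin d → Bool) → ℂ := fun b => if n + γ = boolToInt b then 1 else 0
  have hp : ∑ b, p b = 1 := by simp only [p, sum_ite_eq_boolToInt, if_pos hγ]
  have hpq : ∑ b, p b * q b = if n = 0 then 1 else 0 := by
    simp only [p, q, sum_ite_mul_ite_eq_boolToInt, add_eq_right]
    rw [sum_ite_eq_boolToInt, if_pos hγ]
  have hhigh : ∀ b₁ b₂ : Fin d → Bool, (if b₁ ≠ b₂ then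
      haarHighPass d (boolToInt b₁) (boolToInt b₂) γ *
        haarHighPass d (boolToInt b₁) (boolToInt b₂) (n + γ) else 0) =
      ((2 : ℂ) ^ d)⁻¹ ^ 2 * ((p b₁ - p b₂) * (q b₁ - q b₂)) := by
    intro b₁ b₂
    rw [ite_eq_left_iff.mpr fun h => by simp [not_not.mp h, haarHighPass_self]]
    simp only [haarHighPass, p, q]
    ring
  simp_rw [finsum_polyphase_eq_of_support_subset_cube support_haarFilter_subset hγ,
    finsum_polyphase_eq_of_support_subset_cube (support_haarHighPass_subset _ _) hγ,
    conj_haarFilter, conj_haarHighPass, hhigh, ← mul_sum, sum_sum_sub_mul_sub, hp, hpq]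
  have hlow : haarFilter d γ = ((2 : ℂ) ^ d)⁻¹ := if_pos hγ
  have hq : haarFilter d (n + γ) = ((2 : ℂ) ^ d)⁻¹ * ∑ b, q b := haarFilter_eq_mul_sum _
  rw [hlow, hq, Fintype.card_fun, Fintype.card_bool, Fintype.card_fin]
  push_cast
  field_simp
  ring

/-- The `d`-dimensional Haar low-pass filter together with the high-pass filters
`2^{-d}(δ_{γ₁} - δ_{γ₂})`, one for each unordered pair of distinct vertices
`γ₁, γ₂ ∈ {0,1}^d` (here summed over ordered pairs with a factor `1/2`), forms a
`d`-dimensional dyadic tight framelet filter bank. -/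
theorem haar_directional_tffb (d : ℕ) (hd : 1 ≤ d) (γ : Fin d → ℤ)
    (hγ : ∀ i, γ i = 0 ∨ γ i = 1) (n : Fin d → ℤ) :
    (∑ᶠ k : Fin d → ℤ,
        haarFilter d (fun i => γ i + 2 * k i) *
          (starRingEnd ℂ) (haarFilter d (fun i => n i + γ i + 2 * k i))) +
      (1 / 2 : ℂ) *
        ∑ γ₁ : Fin d → Bool, ∑ γ₂ : Fin d → Bool,
          (if γ₁ ≠ γ₂ then
            ∑ᶠ k : Fin d → ℤ,
              haarHighPass d (boolToInt γ₁) (boolToInt γ₂) (fun i => γ i + 2 * k i) *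
                (starRingEnd ℂ)
                  (haarHighPass d (boolToInt γ₁) (boolToInt γ₂) (fun i => n i + γ i + 2 * k i))
          else 0) =
      ((2 : ℂ) ^ d)⁻¹ * (if n = 0 then 1 else 0) :=
  haar_directional_tffb_general d γ hγ n
end

section
/- Let d ≤ n, let P be a d×n integer matrix of rank d such that P^T ω ∉ 2ℤ^n for every ω ∈ {0,1}^d \ {0}. Let a, b_1, …, b_s : ℤ^n → ℂ be finitely supported filters satisfying the n-dimensional tight framelet filter bank condition: for all ζ ∈ ℝ^n and all β ∈ {0,1}^n, â(ζ)·conj(â(ζ+πβ)) + Σ_{ℓ=1}^s b̂_ℓ(ζ)·conj(b̂_ℓ(ζ+πβ)) = δ(β). Then the projected filters Pa, Pb_1, …, Pb_s : ℤ^d → ℂ satisfy the d-dimensional tight framelet filter bank condition: for all ξ ∈ ℝ^d and all ω ∈ {0,1}^d, (Pa)^∧(ξ)·conj((Pa)^∧(ξ+πω)) + Σ_{ℓ=1}^s (Pb_ℓ)^∧(ξ)·conj((Pb_ℓ)^∧(ξ+πω)) = δ(ω). -/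
open scoped BigOperators

/-- The Fourier series `â(ξ) = Σ_{k ∈ ℤ^d} a(k) e^{-i k·ξ}` of a (finitely supported)
filter `a : ℤ^d → ℂ`. -/
noncomputable def fourierSeries {d : ℕ} (a : (Fin d → ℤ) → ℂ) (ξ : Fin d → ℝ) : ℂ :=
  ∑ᶠ k : Fin d → ℤ, a k * Complex.exp (-Complex.I * ∑ i, (k i : ℂ) * (ξ i : ℂ))

/-- The projected filter `(Pa)(j) := Σ_{k ∈ ℤ^n, Pk = j} a(k)`. -/
noncomputable def projFilter {d n : ℕ} (P : Matrix (Fin d) (Fin n) ℤ)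
    (a : (Fin n → ℤ) → ℂ) : (Fin d → ℤ) → ℂ :=
  fun j => ∑ᶠ (k : Fin n → ℤ) (_ : P.mulVec k = j), a k

lemma fourierSeries_eq_sum {d : ℕ} {a : (Fin d → ℤ) → ℂ} (ha : (Function.support a).Finite)
    (ξ : Fin d → ℝ) :
    fourierSeries a ξ =
      ∑ k ∈ ha.toFinset, a k * Complex.exp (-Complex.I * ∑ i, (k i : ℂ) * (ξ i : ℂ)) := by
  apply finsum_eq_sum_of_support_subset
  intro k hk
  simp only [Function.mem_support] at hk
  have : a k ≠ 0 := fun h0 => hk (by simp [h0])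
  simpa using this

lemma projFilter_eq_sum {d n : ℕ} (P : Matrix (Fin d) (Fin n) ℤ)
    {a : (Fin n → ℤ) → ℂ} (ha : (Function.support a).Finite) (j : Fin d → ℤ) :
    projFilter P a j = ∑ k ∈ ha.toFinset.filter (fun k => P.mulVec k = j), a k := by
  classical
  have : projFilter P a j = ∑ᶠ k, if P.mulVec k = j then a k else 0 := by
    unfold projFilter
    exact finsum_congr fun k => finsum_eq_if
  rw [this, finsum_eq_sum_of_support_subset _ (s := ha.toFinset) ?_, Finset.sum_filter]
  intro k hk
  simp only [Function.mem_support] at hk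
  have : a k ≠ 0 := by intro h0; apply hk; simp [h0]
  simpa using this

lemma fourierSeries_projFilter {d n : ℕ} (P : Matrix (Fin d) (Fin n) ℤ)
    {a : (Fin n → ℤ) → ℂ} (ha : (Function.support a).Finite) (ξ : Fin d → ℝ) :
    fourierSeries (projFilter P a) ξ =
      fourierSeries a (fun i => ∑ j, (P j i : ℝ) * ξ j) := by
  classical
  set T : Finset (Fin d → ℤ) := ha.toFinset.image (fun k => P.mulVec k) with hT
  have hsup : Function.support (fun j => projFilter P a j *
      Complex.exp (-Complex.I * ∑ i, (j i : ℂ) * (ξ i : ℂ))) ⊆ ↑T := by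
    intro j hj
    simp only [Function.mem_support] at hj
    have hpj : projFilter P a j ≠ 0 := fun h0 => hj (by simp [h0])
    rw [projFilter_eq_sum P ha] at hpj
    obtain ⟨k, hk, -⟩ := Finset.exists_ne_zero_of_sum_ne_zero hpj
    simp only [Finset.mem_filter] at hk
    exact Finset.mem_coe.2 (Finset.mem_image.2 ⟨k, hk.1, hk.2⟩)
  rw [fourierSeries, finsum_eq_sum_of_support_subset _ hsup]
  have step : ∀ j ∈ T, projFilter P a j * Complex.exp (-Complex.I * ∑ i, (j i : ℂ) * (ξ i : ℂ))
      = ∑ k ∈ ha.toFinset, (if P.mulVec k = j then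
          a k * Complex.exp (-Complex.I * ∑ i, ((P.mulVec k) i : ℂ) * (ξ i : ℂ)) else 0) := by
    intro j hj
    rw [projFilter_eq_sum P ha, Finset.sum_filter, Finset.sum_mul]
    refine Finset.sum_congr rfl fun k hk => ?_
    by_cases hkj : P.mulVec k = j
    · simp [hkj]
    · simp [hkj]
  rw [Finset.sum_congr rfl step, Finset.sum_comm]
  have step2 : ∀ k ∈ ha.toFinset,
      (∑ j ∈ T, if P.mulVec k = j then
          a k * Complex.exp (-Complex.I * ∑ i, ((P.mulVec k) i : ℂ) * (ξ i : ℂ)) else 0)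
      = a k * Complex.exp (-Complex.I * ∑ i, ((P.mulVec k) i : ℂ) * (ξ i : ℂ)) := by
    intro k hk
    rw [Finset.sum_ite_eq T (P.mulVec k)]
    simp only [hT, Finset.mem_image]
    rw [if_pos ⟨k, hk, rfl⟩]
  rw [Finset.sum_congr rfl step2, fourierSeries_eq_sum ha]
  refine Finset.sum_congr rfl fun k hk => ?_
  congr 3
  calc ∑ j, ((P.mulVec k) j : ℂ) * (ξ j : ℂ)
      = ∑ j, ∑ i, (P j i : ℂ) * (k i : ℂ) * (ξ j : ℂ) := by
        refine Finset.sum_congr rfl fun j _ => ?_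
        rw [Matrix.mulVec, dotProduct]
        push_cast
        rw [Finset.sum_mul]
    _ = ∑ i, (k i : ℂ) * (((∑ j, (P j i : ℝ) * ξ j : ℝ)) : ℂ) := by
        rw [Finset.sum_comm]
        refine Finset.sum_congr rfl fun i _ => ?_
        push_cast
        rw [Finset.mul_sum]
        exact Finset.sum_congr rfl fun j _ => by ring

lemma fourierSeries_add_two_pi {d : ℕ} {a : (Fin d → ℤ) → ℂ} (ha : (Function.support a).Finite)
    (ζ : Fin d → ℝ) (m : Fin d → ℤ) :
    fourierSeries a (fun i => ζ i + 2 * Real.pi * (m i : ℝ)) = fourierSeries a ζ := by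
  rw [fourierSeries_eq_sum ha, fourierSeries_eq_sum ha]
  refine Finset.sum_congr rfl fun k _ => ?_
  congr 1
  have e : (∑ i, (k i : ℂ) * (((ζ i + 2 * Real.pi * (m i : ℝ)) : ℝ) : ℂ))
      = (∑ i, (k i : ℂ) * (ζ i : ℂ)) + ((∑ i, k i * m i : ℤ) : ℂ) * (2 * Real.pi) := by
    push_cast
    rw [Finset.sum_mul, ← Finset.sum_add_distrib]
    exact Finset.sum_congr rfl fun i _ => by ring
  rw [e, mul_add, Complex.exp_add]
  have h2 : Complex.exp (-Complex.I * (((∑ i, k i * m i : ℤ) : ℂ) * (2 * Real.pi))) = 1 := by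
    rw [← Complex.exp_int_mul_two_pi_mul_I (-(∑ i, k i * m i : ℤ))]
    congr 1
    push_cast
    ring
  rw [h2, mul_one]
/-- The projection method: projecting an `n`-dimensional tight framelet filter bank by a
`d × n` integer matrix `P` of rank `d` with `Pᵀω ∉ 2ℤ^n` for all `ω ∈ {0,1}^d \ {0}`
yields a `d`-dimensional tight framelet filter bank. -/
theorem projection_of_tffb (d n s : ℕ) (hdn : d ≤ n) (P : Matrix (Fin d) (Fin n) ℤ)
    (hrank : P.rank = d)
    (hP : ∀ ω : Fin d → ℤ, (∀ i, ω i = 0 ∨ ω i = 1) → ω ≠ 0 →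
      ¬ ∀ j, (2 : ℤ) ∣ P.transpose.mulVec ω j)
    (a : (Fin n → ℤ) → ℂ) (b : Fin s → (Fin n → ℤ) → ℂ)
    (ha : (Function.support a).Finite) (hb : ∀ ℓ, (Function.support (b ℓ)).Finite)
    (h : ∀ (ζ : Fin n → ℝ) (β : Fin n → ℤ), (∀ i, β i = 0 ∨ β i = 1) →
      fourierSeries a ζ *
          (starRingEnd ℂ) (fourierSeries a (fun i => ζ i + Real.pi * (β i : ℝ))) +
        ∑ ℓ, fourierSeries (b ℓ) ζ *
          (starRingEnd ℂ) (fourierSeries (b ℓ) (fun i => ζ i + Real.pi * (β i : ℝ))) =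
        (if β = 0 then 1 else 0)) :
    ∀ (ξ : Fin d → ℝ) (ω : Fin d → ℤ), (∀ i, ω i = 0 ∨ ω i = 1) →
      fourierSeries (projFilter P a) ξ *
          (starRingEnd ℂ)
            (fourierSeries (projFilter P a) (fun i => ξ i + Real.pi * (ω i : ℝ))) +
        ∑ ℓ, fourierSeries (projFilter P (b ℓ)) ξ *
          (starRingEnd ℂ)
            (fourierSeries (projFilter P (b ℓ)) (fun i => ξ i + Real.pi * (ω i : ℝ))) =
        (if ω = 0 then 1 else 0) := by
  intro ξ ω hω
  classical
  set q : Fin n → ℤ := P.transpose.mulVec ω with hq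
  set β : Fin n → ℤ := fun i => q i % 2 with hβ
  set m : Fin n → ℤ := fun i => q i / 2 with hm
  have hβ01 : ∀ i, β i = 0 ∨ β i = 1 := fun i => Int.emod_two_eq_zero_or_one (q i)
  have hqm : ∀ i, q i = 2 * m i + β i := fun i => (Int.mul_ediv_add_emod (q i) 2).symm
  set ζ : Fin n → ℝ := fun i => ∑ j, (P j i : ℝ) * ξ j with hζ
  have hqi : ∀ i, ((q i : ℤ) : ℝ) = ∑ j, (P j i : ℝ) * (ω j : ℝ) := by
    intro i
    rw [hq]
    simp only [Matrix.mulVec, dotProduct, Matrix.transpose_apply]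
    push_cast
    rfl
  have key : ∀ c : (Fin n → ℤ) → ℂ, (Function.support c).Finite →
      fourierSeries (projFilter P c) (fun i => ξ i + Real.pi * (ω i : ℝ)) =
        fourierSeries c (fun i => ζ i + Real.pi * (β i : ℝ)) := by
    intro c hc
    rw [fourierSeries_projFilter P hc,
      ← fourierSeries_add_two_pi hc (fun i => ζ i + Real.pi * (β i : ℝ)) m]
    congr 1
    funext i
    show (∑ j, (P j i : ℝ) * (ξ j + Real.pi * (ω j : ℝ))) = _
    have e1 : (∑ j, (P j i : ℝ) * (ξ j + Real.pi * (ω j : ℝ)))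
        = ζ i + Real.pi * ((q i : ℤ) : ℝ) := by
      rw [hqi i, hζ, Finset.mul_sum, ← Finset.sum_add_distrib]
      exact Finset.sum_congr rfl fun j _ => by ring
    rw [e1]
    have : ((q i : ℤ) : ℝ) = 2 * (m i : ℝ) + (β i : ℝ) := by
      rw [hqm i]; push_cast; ring
    rw [this]; ring
  have key0 : ∀ c : (Fin n → ℤ) → ℂ, (Function.support c).Finite →
      fourierSeries (projFilter P c) ξ = fourierSeries c ζ := fun c hc =>
    fourierSeries_projFilter P hc ξ
  rw [key0 a ha, key a ha]
  have hsum : (∑ ℓ, fourierSeries (projFilter P (b ℓ)) ξ *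
      (starRingEnd ℂ)
        (fourierSeries (projFilter P (b ℓ)) (fun i => ξ i + Real.pi * (ω i : ℝ))))
      = ∑ ℓ, fourierSeries (b ℓ) ζ *
      (starRingEnd ℂ) (fourierSeries (b ℓ) (fun i => ζ i + Real.pi * (β i : ℝ))) := by
    refine Finset.sum_congr rfl fun ℓ _ => ?_
    rw [key0 (b ℓ) (hb ℓ), key (b ℓ) (hb ℓ)]
  rw [hsum, h ζ β hβ01]
  have hiff : β = 0 ↔ ω = 0 := by
    constructor
    · intro hβ0
      by_contra hω0
      obtain ⟨j, hj⟩ := not_forall.mp (hP ω hω hω0)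
      apply hj
      have : β j = 0 := by rw [hβ0]; rfl
      have : q j % 2 = 0 := this
      exact Int.dvd_of_emod_eq_zero this
    · intro hω0
      funext i
      have : q i = 0 := by rw [hq, hω0, Matrix.mulVec_zero]; rfl
      simp [hβ, this]
  by_cases hc : ω = 0
  · rw [if_pos hc, if_pos (hiff.mpr hc)]
  · rw [if_neg hc, if_neg (fun hb0 => hc (hiff.mp hb0))]
end
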